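/- The linear span of the family of functions λ ↦ (λ+i)^{−m}(λ−i)^{−n} on ℝ, where m and n range over nonnegative integers with m+n ≥ 1, is dense with respect to the supremum norm in the space C_∞(ℝ) of continuous complex-valued functions on ℝ vanishing at infinity. -/

import Mathlib

/-!
On the one-point compactification `ℝ ∪ {∞}`, the function `u λ = (λ + i)⁻¹`, `u ∞ = 0`, is
continuous and injective, so by Stone–Weierstrass the star algebra it generates, the span of the
monomials `uᵐ ūⁿ`, is dense in `C(ℝ ∪ {∞}, ℂ)`. If `g` vanishes at infinity and `‖g - p‖ ≤ ε / 2`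
for such a `p`, then `p - p ∞` is within `ε` of `g`; subtracting `p ∞` cancels exactly the
constant monomial, so `p - p ∞` lies in the span of the monomials with `m + n ≥ 1`.
-/

open Filter Complex Topology OnePoint

section StoneWeierstrass

variable {X 𝕜 : Type*} [TopologicalSpace X] [RCLike 𝕜]

theorem StarSubalgebra.separatesPoints_adjoin_singleton_of_injective {f : C(X, 𝕜)}
    (hf : Function.Injective f) : (StarAlgebra.adjoin 𝕜 {f}).SeparatesPoints :=
  fun _ _ hxy => ⟨f, ⟨f, StarAlgebra.subset_adjoin 𝕜 {f} rfl, rfl⟩, hf.ne hxy⟩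

theorem StarSubalgebra.exists_sub_eval_near_of_separatesPoints [CompactSpace X]
    {A : StarSubalgebra 𝕜 C(X, 𝕜)} (hA : A.SeparatesPoints) {F : C(X, 𝕜)} {x₀ : X}
    (hF : F x₀ = 0) {ε : ℝ} (hε : 0 < ε) :
    ∃ p ∈ A, ∀ x, ‖F x - (p x - p x₀)‖ ≤ ε := by
  have hF_mem : F ∈ A.topologicalClosure := by
    rw [ContinuousMap.starSubalgebra_topologicalClosure_eq_top_of_separatesPoints A hA]
    exact StarSubalgebra.mem_top
  obtain ⟨p, hpA, hp⟩ := Metric.mem_closure_iff.mp hF_mem (ε / 2) (half_pos hε)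
  refine ⟨p, hpA, fun x => ?_⟩
  calc ‖F x - (p x - p x₀)‖ = ‖(F x - p x) - (F x₀ - p x₀)‖ := by rw [hF]; congr 1; ring
    _ ≤ dist (F x) (p x) + dist (F x₀) (p x₀) := by
      rw [dist_eq_norm, dist_eq_norm]; exact norm_sub_le _ _
    _ ≤ dist F p + dist F p :=
      add_le_add (ContinuousMap.dist_apply_le_dist x) (ContinuousMap.dist_apply_le_dist x₀)
    _ ≤ ε := by linarith

end StoneWeierstrass

namespace OnePoint

variable (X R : Type*) [TopologicalSpace X] [CommRing R] [TopologicalSpace R]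
  [IsTopologicalRing R]

def restrictSubEvalInfty : C(OnePoint X, R) →ₗ[R] X → R where
  toFun p l := p l - p ∞
  map_add' p q := by ext; simp only [ContinuousMap.add_apply, Pi.add_apply]; ring
  map_smul' c p := by
    ext
    simp only [ContinuousMap.smul_apply, Pi.smul_apply, smul_eq_mul, RingHom.id_apply]
    ring

variable {X R}

@[simp]
theorem restrictSubEvalInfty_apply (p : C(OnePoint X, R)) (l : X) :
    restrictSubEvalInfty X R p l = p l - p ∞ :=
  rfl

end OnePoint

namespace Complex

theorem ofReal_add_I_ne_zero (l : ℝ) : (l : ℂ) + I ≠ 0 := fun h => by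
  simpa using congrArg im h

theorem star_ofReal_add_I (l : ℝ) : star ((l : ℂ) + I) = l - I := by
  simp [sub_eq_add_neg]

theorem tendsto_inv_ofReal_add_I_cobounded :
    Tendsto (fun l : ℝ => ((l : ℂ) + I)⁻¹) (Bornology.cobounded ℝ) (𝓝 0) :=
  tendsto_inv₀_cobounded.comp
    ((tendsto_add_const_cobounded I).comp (RCLike.tendsto_ofReal_cobounded_cobounded ℂ))

end Complex

def resolventPowers : Set (ℝ → ℂ) :=
  {h : ℝ → ℂ | ∃ m n : ℕ, 1 ≤ m + n ∧
    h = fun l : ℝ => (((l : ℂ) + I)⁻¹) ^ m * (((l : ℂ) - I)⁻¹) ^ n}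

noncomputable def resolventOnePoint : C(OnePoint ℝ, ℂ) :=
  continuousMapMk
    ⟨fun l : ℝ => ((l : ℂ) + I)⁻¹, by fun_prop (disch := exact ofReal_add_I_ne_zero)⟩ 0
    (by rw [coclosedCompact_eq_cocompact, ← Metric.cobounded_eq_cocompact]
        exact tendsto_inv_ofReal_add_I_cobounded)

@[simp]
theorem resolventOnePoint_coe (l : ℝ) : resolventOnePoint l = ((l : ℂ) + I)⁻¹ :=
  rfl

@[simp]
theorem resolventOnePoint_infty : resolventOnePoint ∞ = 0 :=
  rfl

theorem resolventOnePoint_injective : Function.Injective resolventOnePoint := by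
  intro x y hxy
  induction x using OnePoint.rec <;> induction y using OnePoint.rec
  · rfl
  · exact absurd (by simpa using hxy.symm) (ofReal_add_I_ne_zero _)
  · exact absurd (by simpa using hxy) (ofReal_add_I_ne_zero _)
  · simpa using hxy

theorem restrictSubEvalInfty_mem_span_resolventPowers {p : C(OnePoint ℝ, ℂ)}
    (hp : p ∈ StarAlgebra.adjoin ℂ {resolventOnePoint}) :
    restrictSubEvalInfty ℝ ℂ p ∈ Submodule.span ℂ resolventPowers := by
  have hp_span : p ∈ Submodule.span ℂ
      (Submonoid.closure ({resolventOnePoint} ∪ star {resolventOnePoint})) := by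
    rw [← StarAlgebra.adjoin_eq_span]
    exact hp
  refine (Submodule.map_span_le _ _ _).mpr ?_ (Submodule.mem_map_of_mem hp_span)
  intro q hq
  rw [Set.star_singleton, Set.singleton_union, SetLike.mem_coe, Submonoid.mem_closure_pair] at hq
  obtain ⟨m, n, rfl⟩ := hq
  rcases Nat.eq_zero_or_pos (m + n) with hmn | hmn
  · obtain ⟨rfl, rfl⟩ : m = 0 ∧ n = 0 := by omega
    convert Submodule.zero_mem _
    ext l
    simp
  · refine Submodule.subset_span ⟨m, n, hmn, funext fun l => ?_⟩
    have h_infty : (0 : ℂ) ^ m * 0 ^ n = 0 := by rw [← pow_add, zero_pow hmn.ne']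
    simp only [restrictSubEvalInfty_apply, ContinuousMap.mul_apply, ContinuousMap.pow_apply,
      ContinuousMap.star_apply, resolventOnePoint_infty, star_zero, h_infty, sub_zero,
      resolventOnePoint_coe, star_inv₀, star_ofReal_add_I]

/-- The linear span of the functions `λ ↦ (λ+i)⁻ᵐ (λ−i)⁻ⁿ`, `m + n ≥ 1`, is dense in the
sup norm in the space of continuous functions `ℝ → ℂ` vanishing at infinity. -/
theorem span_resolvent_powers_dense
    (g : ℝ → ℂ) (hg : Continuous g) (hg0 : Tendsto g (cocompact ℝ) (𝓝 0))
    (ε : ℝ) (hε : 0 < ε) :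
    ∃ h ∈ Submodule.span ℂ
        {h : ℝ → ℂ | ∃ m n : ℕ, 1 ≤ m + n ∧
          h = fun l : ℝ => (((l : ℂ) + I)⁻¹) ^ m * (((l : ℂ) - I)⁻¹) ^ n},
      ∀ l : ℝ, ‖g l - h l‖ ≤ ε := by
  let G : C(OnePoint ℝ, ℂ) :=
    continuousMapMk ⟨g, hg⟩ 0 (by rwa [coclosedCompact_eq_cocompact])
  obtain ⟨p, hpA, hp⟩ := StarSubalgebra.exists_sub_eval_near_of_separatesPoints
    (StarSubalgebra.separatesPoints_adjoin_singleton_of_injective resolventOnePoint_injective)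
    (F := G) (x₀ := ∞) rfl hε
  exact ⟨_, restrictSubEvalInfty_mem_span_resolventPowers hpA, fun l => hp l⟩
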